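/- Let m ∈ ℕ and let a be a diagonal complex m×m matrix whose diagonal entries (eigenvalues) include two entries λ₁ and λ₂ that are not collinear over ℝ (i.e., linearly independent over ℝ in ℂ). Then max(‖exp(z·a)‖, ‖exp(z·a)⁻¹‖) ≥ exp(max(|Re(λ₁ z)|, |Re(λ₂ z)|)) for every z ∈ ℂ, and there exists C > 0 such that |z| ≤ C · max(‖exp(z·a)‖, ‖exp(z·a)⁻¹‖) for every z ∈ ℂ. -/

import Mathlib

/-- The Hilbert-space operator norm of a complex `m × m` matrix. -/
noncomputable def matOpNorm {m : ℕ} (A : Matrix (Fin m) (Fin m) ℂ) : ℝ :=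
  ‖Matrix.toEuclideanCLM (𝕜 := ℂ) A‖

lemma diag_norm_lower {m : ℕ} (e : Fin m → ℂ) (k : Fin m) :
    ‖e k‖ ≤ matOpNorm (Matrix.diagonal e) := by
  have h := (Matrix.toEuclideanCLM (𝕜 := ℂ) (Matrix.diagonal e)).le_opNorm
    (EuclideanSpace.single k 1)
  have h1 : Matrix.toEuclideanCLM (𝕜 := ℂ) (Matrix.diagonal e)
      (EuclideanSpace.single k 1) = EuclideanSpace.single k (e k) := by
    have : EuclideanSpace.single k (1 : ℂ) = WithLp.toLp 2 (Pi.single k 1) := rfl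
    rw [this, Matrix.toEuclideanCLM_toLp,
      show EuclideanSpace.single k (e k) = WithLp.toLp 2 (Pi.single k (e k)) from rfl]
    congr 1
    ext l
    simp only [Matrix.toLin'_apply, Matrix.mulVec_diagonal, Pi.single_apply]
    by_cases hlk : l = k <;> simp [hlk]
  rw [h1, EuclideanSpace.norm_single, EuclideanSpace.norm_single, norm_one, mul_one] at h
  exact h

lemma exp_smul_diag {m : ℕ} (d : Fin m → ℂ) (z : ℂ) :
    NormedSpace.exp (z • Matrix.diagonal d) =
      Matrix.diagonal (fun k => Complex.exp (z * d k)) := by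
  rw [← Matrix.diagonal_smul, Matrix.exp_diagonal]
  have : NormedSpace.exp (z • d) = fun k => Complex.exp (z * d k) := by
    funext k
    rw [Pi.coe_exp, Pi.smul_apply, smul_eq_mul, Complex.exp_eq_exp_ℂ]
  rw [this]

theorem stmt5 (m : ℕ) (d : Fin m → ℂ) (i j : Fin m)
    (hli : LinearIndependent ℝ ![d i, d j])
    (a : Matrix (Fin m) (Fin m) ℂ) (ha : a = Matrix.diagonal d) :
    (∀ z : ℂ,
      Real.exp (max |(d i * z).re| |(d j * z).re|) ≤
        max (matOpNorm (NormedSpace.exp (z • a)))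
          (matOpNorm ((NormedSpace.exp (z • a))⁻¹))) ∧
    ∃ C > (0 : ℝ), ∀ z : ℂ,
      ‖z‖ ≤ C * max (matOpNorm (NormedSpace.exp (z • a)))
        (matOpNorm ((NormedSpace.exp (z • a))⁻¹)) := by
  subst ha
  have key : ∀ (z : ℂ) (k : Fin m),
      Real.exp |(d k * z).re| ≤
        max (matOpNorm (NormedSpace.exp (z • Matrix.diagonal d)))
          (matOpNorm ((NormedSpace.exp (z • Matrix.diagonal d))⁻¹)) := by
    intro z k
    have hinv : (NormedSpace.exp (z • Matrix.diagonal d))⁻¹ =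
        NormedSpace.exp ((-z) • Matrix.diagonal d) := by
      rw [← Matrix.exp_neg, neg_smul]
    have h1 : Real.exp ((d k * z).re) ≤
        matOpNorm (NormedSpace.exp (z • Matrix.diagonal d)) := by
      have := diag_norm_lower (fun k => Complex.exp (z * d k)) k
      rw [exp_smul_diag]
      simpa [Complex.norm_exp, mul_comm] using this
    have h2 : Real.exp (-(d k * z).re) ≤
        matOpNorm ((NormedSpace.exp (z • Matrix.diagonal d))⁻¹) := by
      rw [hinv, exp_smul_diag]
      have := diag_norm_lower (fun k => Complex.exp ((-z) * d k)) k
      simpa [Complex.norm_exp, mul_comm] using this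
    rcases abs_cases ((d k * z).re) with ⟨h, _⟩ | ⟨h, _⟩
    · rw [h]; exact h1.trans (le_max_left _ _)
    · rw [h]; exact h2.trans (le_max_right _ _)
  constructor
  · intro z
    rcases max_cases |(d i * z).re| |(d j * z).re| with ⟨h, _⟩ | ⟨h, _⟩
    · rw [h]; exact key z i
    · rw [h]; exact key z j
  · -- part 2
    set L : ℂ →ₗ[ℝ] ℝ × ℝ :=
      { toFun := fun z => ((d i * z).re, (d j * z).re)
        map_add' := by intro x y; simp [mul_add]
        map_smul' := by intro c x; simp [Complex.smul_re]; ring_nf; simp } with hL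
    have hdi : d i ≠ 0 := by
      have := hli.ne_zero 0
      simpa using this
    have hinj : Function.Injective L := by
      rw [injective_iff_map_eq_zero]
      intro z hz
      rw [hL] at hz
      simp only [LinearMap.coe_mk, AddHom.coe_mk, Prod.mk_eq_zero] at hz
      obtain ⟨h1, h2⟩ := hz
      by_contra hz0
      set t1 := (d i * z).im
      set t2 := (d j * z).im
      have e1 : d i * z = t1 * Complex.I := by
        apply Complex.ext <;> simp [h1, t1]
      have e2 : d j * z = t2 * Complex.I := by
        apply Complex.ext <;> simp [h2, t2]
      have hcomb : t2 • d i + (-t1) • d j = 0 := by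
        have : (t2 • d i + (-t1) • d j) * z = 0 := by
          rw [add_mul, smul_mul_assoc, smul_mul_assoc, e1, e2]
          simp [smul_eq_mul]
          ring
        rcases mul_eq_zero.mp this with h | h
        · exact h
        · exact absurd h hz0
      obtain ⟨ht2, ht1⟩ := LinearIndependent.pair_iff.mp hli t2 (-t1) hcomb
      have ht1' : t1 = 0 := by linarith [neg_eq_zero.mp ht1]
      have : d i * z = 0 := by rw [e1, ht1']; simp
      rcases mul_eq_zero.mp this with h | h
      · exact hdi h
      · exact hz0 h
    have hdim : Module.finrank ℝ ℂ = Module.finrank ℝ (ℝ × ℝ) := by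
      simp [Complex.finrank_real_complex]
    let E := L.linearEquivOfInjective hinj hdim
    let g : (ℝ × ℝ) →L[ℝ] ℂ := LinearMap.toContinuousLinearMap (E.symm : (ℝ × ℝ) →ₗ[ℝ] ℂ)
    refine ⟨‖g‖ + 1, by positivity, fun z => ?_⟩
    have hrec : z = g (L z) := by
      have h1 : g (L z) = E.symm (L z) := rfl
      have h2 : L z = E z := (L.linearEquivOfInjective_apply hinj hdim z).symm
      rw [h1, h2, E.symm_apply_apply]
    have hnorm : ‖z‖ ≤ ‖g‖ * ‖L z‖ := by
      conv_lhs => rw [hrec]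
      exact g.le_opNorm _
    have hLnorm : ‖L z‖ = max |(d i * z).re| |(d j * z).re| := by
      rw [hL]
      simp [Prod.norm_def, Real.norm_eq_abs]
    set M := max |(d i * z).re| |(d j * z).re| with hM
    have hM0 : 0 ≤ M := le_trans (abs_nonneg _) (le_max_left _ _)
    have hMexp : M ≤ Real.exp M := (Real.add_one_le_exp M).trans' (by linarith)
    have hkey : Real.exp M ≤
        max (matOpNorm (NormedSpace.exp (z • Matrix.diagonal d)))
          (matOpNorm ((NormedSpace.exp (z • Matrix.diagonal d))⁻¹)) := by
      rcases max_cases |(d i * z).re| |(d j * z).re| with ⟨h, _⟩ | ⟨h, _⟩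
      · rw [hM, h]; exact key z i
      · rw [hM, h]; exact key z j
    calc ‖z‖ = ‖z‖ := rfl
      _ ≤ ‖g‖ * ‖L z‖ := hnorm
      _ = ‖g‖ * M := by rw [hLnorm]
      _ ≤ (‖g‖ + 1) * Real.exp M := by
          apply mul_le_mul (by linarith [norm_nonneg g]) hMexp hM0 (by positivity)
      _ ≤ (‖g‖ + 1) * _ := by
          apply mul_le_mul_of_nonneg_left hkey (by positivity)
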